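/- arXiv:1503.04738 — 3 statements merged into one kernel-verified Lean document; each statement's English description precedes it below -/
import Mathlib

section
/- Let (X,S,U,f) be a splitting structure on a complete metric space X and let B be a closed ball of X. Then for any two sequences (u_i)_{i∈ℕ} and (v_i)_{i∈ℕ} in U with u_i ∣ u_{i+1}, v_i ∣ v_{i+1}, u_i → ∞ and v_i → ∞, one has ⋂_{i=1}^∞ A_{u_i}(B) = ⋂_{i=1}^∞ A_{v_i}(B). -/
open scoped Classical
open Filter Set

/-- A closed (metric) ball in a metric space, recorded by its centre and its
(positive) radius. -/
structure SSBall (X : Type*) [MetricSpace X] where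
  center : X
  radius : ℝ
  radius_pos : 0 < radius

namespace SSBall

variable {X : Type*} [MetricSpace X]

/-- The underlying set of points of a ball. -/
def toSet (B : SSBall X) : Set X := Metric.closedBall B.center B.radius

end SSBall

/-- A splitting structure `(X, S, U, f)` on a metric space `X`:
`U ⊆ ℕ` is an infinite multiplicatively closed set of positive integers, closed under
division of its elements; `f` is completely multiplicative on `U`; and `S` splits every
closed ball `B` into `f u` closed sub-balls of radius `rad(B)/u` whose centres are
`2 rad(B)/u`-separated, compatibly with multiplication in `U`. -/
structure SplittingStructure (X : Type*) [MetricSpace X] where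
  U : Set ℕ
  f : ℕ → ℕ
  S : SSBall X → ℕ → Finset (SSBall X)
  U_pos : ∀ u ∈ U, 0 < u
  U_infinite : U.Infinite
  mul_mem : ∀ u ∈ U, ∀ v ∈ U, u * v ∈ U
  div_mem : ∀ u ∈ U, ∀ v ∈ U, u ∣ v → v / u ∈ U
  f_pos : ∀ u ∈ U, 0 < f u
  f_mul : ∀ u ∈ U, ∀ v ∈ U, f (u * v) = f u * f v
  S_subset : ∀ B : SSBall X, ∀ u ∈ U, ∀ b ∈ S B u, b.toSet ⊆ B.toSet
  S_radius : ∀ B : SSBall X, ∀ u ∈ U, ∀ b ∈ S B u, b.radius = B.radius / u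
  S_card : ∀ B : SSBall X, ∀ u ∈ U, (S B u).card = f u
  S_sep : ∀ B : SSBall X, ∀ u ∈ U, ∀ b₁ ∈ S B u, ∀ b₂ ∈ S B u,
    b₁ ≠ b₂ → 2 * B.radius / u ≤ dist b₁.center b₂.center
  S_comp : ∀ B : SSBall X, ∀ u ∈ U, ∀ v ∈ U,
    S B (u * v) = (S B u).biUnion fun b => S b v

namespace SplittingStructure

variable {X : Type*} [MetricSpace X]

/-- `A_u(B)`, the union of the balls of `S(B,u)`. -/
def Au (σ : SplittingStructure X) (B : SSBall X) (u : ℕ) : Set X :=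
  ⋃ b ∈ σ.S B u, b.toSet

/-- The limit set `A_∞(B)`.  (For any sequence `(u_i)` in `U` with `u_i ∣ u_{i+1}` and
`u_i → ∞` the intersection `⋂_i A_{u_i}(B)` is independent of the sequence and coincides
with the intersection of all the sets `A_u(B)`, `u ∈ U`.) -/
def Ainfty (σ : SplittingStructure X) (B : SSBall X) : Set X :=
  ⋂ u ∈ σ.U, σ.Au B u

/-- A splitting structure is nontrivial if `f` is not identically `1` on `U`. -/
def Nontrivial (σ : SplittingStructure X) : Prop := ∃ u ∈ σ.U, σ.f u ≠ 1

/-- `K` is a generalised `(B, ℛ, r)`-Cantor set for the splitting structure `σ`: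
it arises from the iterative construction that starts with `𝓑 0 = {B}`, and in which
`𝓑 (n+1)` is obtained from the collection of candidate balls
`I_{n+1} = ⋃_{B' ∈ 𝓑 n} S(B', R n)` by removing, for each `k = 0, …, n` and each ball
`B'' ∈ 𝓑 (n-k)`, at most `r (n-k) n` balls lying in `S(B'', R_{n-k} ⋯ R_n)`
(the balls removed at stage `k` form the collection `E k`). -/
def IsGenCantor (σ : SplittingStructure X) (B : SSBall X) (R : ℕ → ℕ)
    (r : ℕ → ℕ → ℝ) (K : Set X) : Prop :=
  ∃ 𝓑 : ℕ → Finset (SSBall X),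
    𝓑 0 = {B} ∧
    (∀ n : ℕ, ∃ E : ℕ → Finset (SSBall X),
      (∀ k ≤ n, E k ⊆ (𝓑 (n - k)).biUnion fun B'' =>
          σ.S B'' (∏ i ∈ Finset.range (k + 1), R (n - i))) ∧
      (∀ k ≤ n, ∀ B'' ∈ 𝓑 (n - k),
        ((E k ∩ σ.S B'' (∏ i ∈ Finset.range (k + 1), R (n - i))).card : ℝ)
          ≤ r (n - k) n) ∧
      𝓑 (n + 1) = ((𝓑 n).biUnion fun B' => σ.S B' (R n)) \
          (Finset.range (n + 1)).biUnion E) ∧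
    K = ⋂ n, ⋃ b ∈ 𝓑 n, b.toSet

/-- `E` is `ε₀`-Cantor-winning on the ball `B` for the splitting structure `σ`. -/
def CantorWinningOn (σ : SplittingStructure X) (ε₀ : ℝ) (B : SSBall X)
    (E : Set X) : Prop :=
  ∀ ε : ℝ, 0 < ε → ε < ε₀ → ∃ Rε ∈ σ.U, ∀ R ∈ σ.U, Rε ≤ R →
    ∃ K : Set X,
      σ.IsGenCantor B (fun _ => R)
        (fun m n => (σ.f R : ℝ) ^ (((n : ℝ) - (m : ℝ) + 1) * (1 - ε))) K ∧
      K ⊆ E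

/-- `E` is `ε₀`-Cantor-winning for `σ` if it is `ε₀`-Cantor-winning on every ball. -/
def CantorWinning (σ : SplittingStructure X) (ε₀ : ℝ) (E : Set X) : Prop :=
  ∀ B : SSBall X, σ.CantorWinningOn ε₀ B E

end SplittingStructure

/-- Condition (S4) with an explicit constant `C`: no closed ball of `X` intersects more
than `C` pairwise disjoint open balls of the same radius as itself. -/
def CondS4With (X : Type*) [MetricSpace X] (C : ℕ) : Prop :=
  ∀ (x : X) (ρ : ℝ), 0 < ρ → ∀ T : Finset X,
    (∀ y ∈ T, (Metric.ball y ρ ∩ Metric.closedBall x ρ).Nonempty) →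
    (T : Set X).PairwiseDisjoint (fun y => Metric.ball y ρ) →
    T.card ≤ C

/-- Condition (S4). -/
def CondS4 (X : Type*) [MetricSpace X] : Prop := ∃ C : ℕ, CondS4With X C

/-- Condition (S5): for each `K > 1` there is a constant `C(K,X)` such that no ball of
radius `K·ρ` intersects more than `C(K,X)` pairwise disjoint open balls of radius `ρ`. -/
def CondS5 (X : Type*) [MetricSpace X] : Prop :=
  ∀ K : ℝ, 1 < K → ∃ C : ℕ, ∀ (x : X) (ρ : ℝ), 0 < ρ → ∀ T : Finset X,
    (∀ y ∈ T, (Metric.ball y ρ ∩ Metric.closedBall x (K * ρ)).Nonempty) →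
    (T : Set X).PairwiseDisjoint (fun y => Metric.ball y ρ) →
    T.card ≤ C

/-! Every point of `A_u(B)` lies within `2 rad(B)/u` of `A_w(B)`: the sub-ball of `S(B,u)`
containing it has radius `rad(B)/u` and, via `S(B, u w) = ⋃_{b ∈ S(B,u)} S(b,w) ⊆ A_w(B)`,
contains a point of `A_w(B)`. Since `A_w(B)` is closed and `u_i → ∞`, every chain intersection
equals `⋂_{w ∈ U} A_w(B)`. -/

open scoped Topology

namespace SplittingStructure

variable {X : Type*} [MetricSpace X] (σ : SplittingStructure X) (B : SSBall X)

lemma isClosed_Au (u : ℕ) : IsClosed (σ.Au B u) :=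
  (σ.S B u).finite_toSet.isClosed_biUnion fun _ _ => Metric.isClosed_closedBall

lemma subset_Au {u : ℕ} {b : SSBall X} (hb : b ∈ σ.S B u) : b.toSet ⊆ σ.Au B u :=
  subset_biUnion_of_mem (u := fun b : SSBall X => b.toSet) (Finset.mem_coe.mpr hb)

lemma S_nonempty {u : ℕ} (hu : u ∈ σ.U) : (σ.S B u).Nonempty := by
  rw [← Finset.card_pos, σ.S_card B u hu]
  exact σ.f_pos u hu

lemma Au_mul_subset_Au_left {u w : ℕ} (hu : u ∈ σ.U) (hw : w ∈ σ.U) :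
    σ.Au B (u * w) ⊆ σ.Au B u := by
  simp only [Au, σ.S_comp B u hu w hw, Finset.set_biUnion_biUnion]
  exact iUnion₂_mono fun b _ => iUnion₂_subset fun b' hb' => σ.S_subset b w hw b' hb'

lemma Au_mul_subset_Au_right {u w : ℕ} (hu : u ∈ σ.U) (hw : w ∈ σ.U) :
    σ.Au B (u * w) ⊆ σ.Au B w :=
  mul_comm u w ▸ σ.Au_mul_subset_Au_left B hw hu

lemma exists_mem_Au_dist_le {u w : ℕ} (hu : u ∈ σ.U) (hw : w ∈ σ.U) {x : X}
    (hx : x ∈ σ.Au B u) : ∃ y ∈ σ.Au B w, dist x y ≤ 2 * B.radius / u := by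
  simp only [Au, mem_iUnion] at hx
  obtain ⟨b, hb, hxb⟩ := hx
  obtain ⟨b', hb'⟩ := σ.S_nonempty b hw
  have hcenter : b'.center ∈ b'.toSet := Metric.mem_closedBall_self b'.radius_pos.le
  have hb'B : b' ∈ σ.S B (u * w) := by
    rw [σ.S_comp B u hu w hw]
    exact Finset.mem_biUnion.mpr ⟨b, hb, hb'⟩
  refine ⟨b'.center, σ.Au_mul_subset_Au_right B hu hw (σ.subset_Au B hb'B hcenter), ?_⟩
  have hrad : b.radius = B.radius / u := σ.S_radius B u hu b hb
  have hxb' : dist x b.center ≤ B.radius / u := hrad ▸ hxb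
  have hcb' : dist b'.center b.center ≤ B.radius / u :=
    hrad ▸ σ.S_subset b w hw b' hb' hcenter
  calc dist x b'.center ≤ dist x b.center + dist b'.center b.center := dist_triangle_right _ _ _
    _ ≤ B.radius / u + B.radius / u := add_le_add hxb' hcb'
    _ = 2 * B.radius / u := by ring

lemma iInter_Au_subset_Au {u : ℕ → ℕ} (huU : ∀ i, u i ∈ σ.U) (hut : Tendsto u atTop atTop)
    {w : ℕ} (hw : w ∈ σ.U) : ⋂ i, σ.Au B (u i) ⊆ σ.Au B w := by
  intro x hx
  rw [← (σ.isClosed_Au B w).closure_eq, Metric.mem_closure_iff]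
  intro ε hε
  have hsmall : Tendsto (fun i => 2 * B.radius / (u i : ℝ)) atTop (𝓝 0) :=
    tendsto_const_nhds.div_atTop (tendsto_natCast_atTop_iff.mpr hut)
  obtain ⟨i, hi⟩ := (hsmall.eventually (gt_mem_nhds hε)).exists
  obtain ⟨y, hy, hxy⟩ := σ.exists_mem_Au_dist_le B (huU i) hw (mem_iInter.mp hx i)
  exact ⟨y, hy, hxy.trans_lt hi⟩

lemma iInter_Au_eq_Ainfty {u : ℕ → ℕ} (huU : ∀ i, u i ∈ σ.U) (hut : Tendsto u atTop atTop) :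
    ⋂ i, σ.Au B (u i) = σ.Ainfty B := by
  refine Subset.antisymm (fun x hx => mem_iInter₂.mpr fun w hw => ?_) fun x hx => ?_
  · exact σ.iInter_Au_subset_Au B huU hut hw hx
  · exact mem_iInter.mpr fun i => mem_iInter₂.mp hx (u i) (huU i)

end SplittingStructure

theorem intersection_chain_independent_general {X : Type*} [MetricSpace X]
    (σ : SplittingStructure X) (B : SSBall X)
    (u v : ℕ → ℕ)
    (huU : ∀ i, u i ∈ σ.U) (hvU : ∀ i, v i ∈ σ.U)
    (hut : Filter.Tendsto u Filter.atTop Filter.atTop)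
    (hvt : Filter.Tendsto v Filter.atTop Filter.atTop) :
    (⋂ i, σ.Au B (u i)) = ⋂ i, σ.Au B (v i) := by
  rw [σ.iInter_Au_eq_Ainfty B huU hut, σ.iInter_Au_eq_Ainfty B hvU hvt]

/-- For a splitting structure on a complete metric space, the
intersection `⋂_i A_{u_i}(B)` along any divisibility chain `(u_i)` in `U` tending to
infinity does not depend on the chosen chain. -/
theorem intersection_chain_independent {X : Type*} [MetricSpace X] [CompleteSpace X]
    (σ : SplittingStructure X) (B : SSBall X)
    (u v : ℕ → ℕ)
    (huU : ∀ i, u i ∈ σ.U) (hvU : ∀ i, v i ∈ σ.U)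
    (hud : ∀ i, u i ∣ u (i + 1)) (hvd : ∀ i, v i ∣ v (i + 1))
    (hut : Filter.Tendsto u Filter.atTop Filter.atTop)
    (hvt : Filter.Tendsto v Filter.atTop Filter.atTop) :
    (⋂ i, σ.Au B (u i)) = ⋂ i, σ.Au B (v i) :=
  intersection_chain_independent_general σ B u v huU hvU hut hvt
end

section
/- Let K(B,ℛ,r) be a generalised Cantor set in a complete metric space X carrying a splitting structure (X,S,U,f), built from a ball B, a sequence ℛ = (R_n)_{n≥0} in U and parameters r = (r_{m,n})_{0≤m≤n}. Define t₀ := f(R₀) − r_{0,0} and, for n ≥ 1, t_n := f(R_n) − r_{n,n} − Σ_{k=1}^{n} r_{n−k,n} / (∏_{i=1}^{k} t_{n−i}). If t_n > 0 for all n ≥ 0, then K(B,ℛ,r) ≠ ∅. -/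
open scoped Classical
open Filter Set

/-! The counting argument of the paper: if `N n` balls survive at level `n`, then at least
`t n * N n` survive at level `n + 1`, so every level is nonempty.  Kőnig's lemma then yields a
nested sequence of surviving balls `b n` with `b (n + 1) ∈ S (b n) (R n)`.  Their centres form a
Cauchy sequence: the radii tend to `0` unless `R n = 1` eventually, in which case the sequence of
balls is eventually constant.  The limit of the centres lies in every `b n`, hence in `K`. -/

open scoped Finset

theorem card_le_mul_card_of_subset_biUnion {ι α : Type*} [DecidableEq α] {s : Finset ι}
    {T : ι → Finset α} {E : Finset α} (hE : E ⊆ s.biUnion T) {c : ℝ}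
    (hc : ∀ i ∈ s, (#(E ∩ T i) : ℝ) ≤ c) : (#E : ℝ) ≤ c * #s := by
  have hcover : E ⊆ s.biUnion fun i => E ∩ T i := fun x hx => by
    obtain ⟨i, hi, hxi⟩ := Finset.mem_biUnion.1 (hE hx)
    exact Finset.mem_biUnion.2 ⟨i, hi, Finset.mem_inter.2 ⟨hx, hxi⟩⟩
  calc (#E : ℝ) ≤ ∑ i ∈ s, (#(E ∩ T i) : ℝ) := by
        exact_mod_cast (Finset.card_le_card hcover).trans Finset.card_biUnion_le
    _ ≤ ∑ _i ∈ s, c := Finset.sum_le_sum hc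
    _ = c * #s := by rw [Finset.sum_const, nsmul_eq_mul, mul_comm]

theorem tendsto_prod_range_atTop_of_frequently_ne_one {R : ℕ → ℕ} (hpos : ∀ n, 0 < R n)
    (hfreq : ∃ᶠ n in atTop, R n ≠ 1) :
    Tendsto (fun n => ∏ i ∈ Finset.range n, R i) atTop atTop := by
  have hmono : Monotone fun n => ∏ i ∈ Finset.range n, R i :=
    monotone_nat_of_le_succ fun n => by
      rw [Finset.prod_range_succ]
      exact Nat.le_mul_of_pos_right _ (hpos n)
  have hpow : ∀ j, ∃ n, 2 ^ j ≤ ∏ i ∈ Finset.range n, R i := by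
    intro j
    induction j with
    | zero => exact ⟨0, by simp⟩
    | succ j ih =>
      obtain ⟨n, hn⟩ := ih
      obtain ⟨m, hnm, hm⟩ := (frequently_atTop.1 hfreq) n
      refine ⟨m + 1, ?_⟩
      rw [Finset.prod_range_succ, pow_succ]
      exact Nat.mul_le_mul (hn.trans (hmono hnm)) (by have := hpos m; omega)
  refine tendsto_atTop_atTop_of_monotone hmono fun M => ?_
  obtain ⟨n, hn⟩ := hpow M
  exact ⟨n, (Nat.lt_two_pow_self).le.trans hn⟩

section Konig

variable {β : Type*} (A : ℕ → Finset β) (Rel : ℕ → β → β → Prop)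

-- Constant beyond `i`, so that the paths of each length form a finite type.
def IsPathUpTo (i : ℕ) (c : ℕ → β) : Prop :=
  (∀ k ≤ i, c k ∈ A k) ∧ (∀ k < i, Rel k (c k) (c (k + 1))) ∧
    ∀ k, i ≤ k → c k = c i

def PathUpTo (i : ℕ) : Type _ := {c : ℕ → β // IsPathUpTo A Rel i c}

variable {A Rel}

theorem exists_isPathUpTo (hpar : ∀ n, ∀ x ∈ A (n + 1), ∃ p ∈ A n, Rel n p x) :
    ∀ i, ∀ x ∈ A i, ∃ c, IsPathUpTo A Rel i c ∧ c i = x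
  | 0, x, hx => ⟨fun _ => x, ⟨fun k hk => by rwa [Nat.le_zero.1 hk], by simp, by simp⟩, rfl⟩
  | i + 1, x, hx => by
    obtain ⟨p, hp, hpx⟩ := hpar i x hx
    obtain ⟨c, ⟨hA, hRel, -⟩, rfl⟩ := exists_isPathUpTo hpar i p hp
    refine ⟨fun k => if k ≤ i then c k else x,
      ⟨fun k hk => ?_, fun k hk => ?_, fun k hk => ?_⟩, by simp⟩
    · by_cases hki : k ≤ i
      · simpa [hki] using hA k hki
      · simpa [hki, show k = i + 1 by omega] using hx
    · by_cases hki : k + 1 ≤ i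
      · simpa [hki, show k ≤ i by omega] using hRel k hki
      · simpa [show k = i by omega] using hpx
    · simp [show ¬k ≤ i by omega]

namespace PathUpTo

theorem nonempty (hne : ∀ n, (A n).Nonempty)
    (hpar : ∀ n, ∀ x ∈ A (n + 1), ∃ p ∈ A n, Rel n p x) (i : ℕ) :
    Nonempty (PathUpTo A Rel i) :=
  let ⟨x, hx⟩ := hne i
  let ⟨c, hc, _⟩ := exists_isPathUpTo hpar i x hx
  ⟨⟨c, hc⟩⟩

theorem ext_of_eq_last {i : ℕ} {c c' : PathUpTo A Rel i} (hlast : c.1 i = c'.1 i)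
    (hinit : ∀ k < i, c.1 k = c'.1 k) : c = c' := by
  refine Subtype.ext <| funext fun k => ?_
  rcases lt_or_ge k i with hk | hk
  · exact hinit k hk
  · rw [c.2.2.2 k hk, c'.2.2.2 k hk, hlast]

instance finite_zero : Finite (PathUpTo A Rel 0) :=
  Finite.of_injective (fun c : PathUpTo A Rel 0 => (⟨c.1 0, c.2.1 0 le_rfl⟩ : A 0))
    fun _ _ h => ext_of_eq_last (congrArg Subtype.val h) fun _ hk => absurd hk (Nat.not_lt_zero _)

def restrict {i j : ℕ} (hij : i ≤ j) (c : PathUpTo A Rel j) : PathUpTo A Rel i := by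
  refine ⟨fun k => c.1 (min k i), fun k hk => ?_, fun k hk => ?_, fun k hk => ?_⟩
  · simpa [min_eq_left hk] using c.2.1 k (hk.trans hij)
  · simpa [min_eq_left hk.le, min_eq_left (Nat.succ_le_of_lt hk)] using c.2.2.1 k (by omega)
  · simp [min_eq_right hk]

theorem restrict_apply_of_le {i j k : ℕ} (hij : i ≤ j) (c : PathUpTo A Rel j) (hk : k ≤ i) :
    (c.restrict hij).1 k = c.1 k := by
  simp [restrict, min_eq_left hk]

theorem restrict_self {i : ℕ} (c : PathUpTo A Rel i) : c.restrict le_rfl = c := by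
  refine Subtype.ext <| funext fun k => ?_
  rcases le_total k i with hk | hk
  · exact restrict_apply_of_le le_rfl c hk
  · simp [restrict, min_eq_right hk, c.2.2.2 k hk]

theorem restrict_restrict {i j k : ℕ} (hij : i ≤ j) (hjk : j ≤ k) (c : PathUpTo A Rel k) :
    (c.restrict hjk).restrict hij = c.restrict (hij.trans hjk) :=
  Subtype.ext <| funext fun l => by simp only [restrict, min_assoc, min_eq_left hij]

theorem finite_restrict_fiber (i : ℕ) (a : PathUpTo A Rel i) :
    {c : PathUpTo A Rel (i + 1) | c.restrict (Nat.le_succ i) = a}.Finite := by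
  refine Set.Finite.of_finite_image (f := fun c : PathUpTo A Rel (i + 1) => c.1 (i + 1))
    ((A (i + 1)).finite_toSet.subset ?_) fun c hc c' hc' hlast => ext_of_eq_last hlast ?_
  · rintro _ ⟨c, -, rfl⟩
    exact c.2.1 _ le_rfl
  · intro k hk
    have hk : k ≤ i := Nat.le_of_lt_succ hk
    have := congrArg (fun d : PathUpTo A Rel i => d.1 k) (hc.trans hc'.symm)
    simpa only [restrict_apply_of_le _ _ hk] using this

end PathUpTo

/-- Kőnig's lemma. -/
theorem exists_seq_mem_rel_of_forall_exists_parent (hne : ∀ n, (A n).Nonempty)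
    (hpar : ∀ n, ∀ x ∈ A (n + 1), ∃ p ∈ A n, Rel n p x) :
    ∃ b : ℕ → β, (∀ n, b n ∈ A n) ∧ ∀ n, Rel n (b n) (b (n + 1)) := by
  have := PathUpTo.nonempty hne hpar
  obtain ⟨f, hf⟩ := exists_seq_forall_proj_of_forall_finite (α := PathUpTo A Rel)
    PathUpTo.restrict (fun _ => PathUpTo.restrict_self)
    (fun _ _ _ => PathUpTo.restrict_restrict)
    PathUpTo.finite_restrict_fiber
  refine ⟨fun n => (f n).1 n, fun n => (f n).2.1 n le_rfl, fun n => ?_⟩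
  have hlast : (f n).1 n = (f (n + 1)).1 n := by
    rw [← hf (Nat.le_succ n), PathUpTo.restrict_apply_of_le _ _ le_rfl]
  simpa only [hlast] using (f (n + 1)).2.2.1 n (Nat.lt_succ_self n)

end Konig

theorem prod_Icc_mul_le_of_mul_le_succ {t N : ℕ → ℝ} (ht : ∀ j, 0 ≤ t j) {n : ℕ}
    (hN : ∀ j < n, t j * N j ≤ N (j + 1)) :
    ∀ k ≤ n, (∏ i ∈ Finset.Icc 1 k, t (n - i)) * N (n - k) ≤ N n := by
  intro k
  induction k with
  | zero => simp
  | succ k ih =>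
    intro hk
    have hstep : t (n - (k + 1)) * N (n - (k + 1)) ≤ N (n - k) := by
      simpa [show n - (k + 1) + 1 = n - k by omega] using hN (n - (k + 1)) (by omega)
    rw [Finset.prod_Icc_succ_top (by omega), mul_assoc]
    exact (mul_le_mul_of_nonneg_left hstep (Finset.prod_nonneg fun i _ => ht _)).trans
      (ih (by omega))

/-- The defining recursion of `t` is exactly what makes the lower bound `t n * N n ≤ N (n + 1)`
propagate: each earlier level `N (n - k)` is at most `N n / ∏_{i=1}^{k} t (n - i)`. -/
theorem mul_le_succ_of_le_sub_sum {a N t : ℕ → ℝ} {r : ℕ → ℕ → ℝ}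
    (hr : ∀ m n, m ≤ n → 0 ≤ r m n)
    (ht : ∀ n, t n = a n - r n n -
      ∑ k ∈ Finset.Icc 1 n, r (n - k) n / ∏ i ∈ Finset.Icc 1 k, t (n - i))
    (htpos : ∀ n, 0 < t n)
    (hN : ∀ n, a n * N n - ∑ k ∈ Finset.range (n + 1), r (n - k) n * N (n - k) ≤ N (n + 1))
    (n : ℕ) :
    t n * N n ≤ N (n + 1) := by
  induction n using Nat.strong_induction_on with
  | _ n ih =>
  have hchain := prod_Icc_mul_le_of_mul_le_succ (fun j => (htpos j).le) ih
  have hterm : ∀ k ∈ Finset.Icc 1 n,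
      r (n - k) n * N (n - k) ≤ r (n - k) n / (∏ i ∈ Finset.Icc 1 k, t (n - i)) * N n := by
    intro k hk
    have hk := (Finset.mem_Icc.1 hk).2
    set P := ∏ i ∈ Finset.Icc 1 k, t (n - i)
    have hP : 0 < P := Finset.prod_pos fun i _ => htpos _
    calc r (n - k) n * N (n - k) = r (n - k) n / P * (P * N (n - k)) := by field_simp
      _ ≤ r (n - k) n / P * N n :=
          mul_le_mul_of_nonneg_left (hchain k hk) (div_nonneg (hr _ _ (Nat.sub_le n k)) hP.le)
  have hsplit : ∑ k ∈ Finset.range (n + 1), r (n - k) n * N (n - k)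
      = r n n * N n + ∑ k ∈ Finset.Icc 1 n, r (n - k) n * N (n - k) := by
    have hrange : Finset.range (n + 1) = insert 0 (Finset.Icc 1 n) := by
      ext k
      simp only [Finset.mem_range, Finset.mem_insert, Finset.mem_Icc]
      omega
    rw [hrange, Finset.sum_insert (by simp), Nat.sub_zero]
  have hsum := Finset.sum_le_sum hterm
  rw [← Finset.sum_mul] at hsum
  have hrec := hN n
  rw [ht n]
  linarith

namespace SplittingStructure

variable {X : Type*} [MetricSpace X] (σ : SplittingStructure X)

theorem one_mem : 1 ∈ σ.U := by
  obtain ⟨u, hu⟩ := σ.U_infinite.nonempty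
  simpa [Nat.div_self (σ.U_pos u hu)] using σ.div_mem u hu u hu dvd_rfl

theorem f_one : σ.f 1 = 1 := by
  have h := σ.f_mul 1 σ.one_mem 1 σ.one_mem
  have hpos := σ.f_pos 1 σ.one_mem
  rw [one_mul] at h
  nlinarith

theorem prod_range_mem {R : ℕ → ℕ} (hR : ∀ n, R n ∈ σ.U) (n : ℕ) :
    ∏ i ∈ Finset.range n, R i ∈ σ.U := by
  induction n with
  | zero => simpa using σ.one_mem
  | succ n ih => simpa [Finset.prod_range_succ] using σ.mul_mem _ ih _ (hR n)

theorem S_one_eq_singleton {p x : SSBall X} (hx : x ∈ σ.S p 1) : σ.S x 1 = {x} := by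
  obtain ⟨y, hy⟩ := Finset.card_eq_one.1 ((σ.S_card p 1 σ.one_mem).trans σ.f_one)
  rw [hy, Finset.mem_singleton] at hx
  subst hx
  simpa [hy] using (σ.S_comp p 1 σ.one_mem 1 σ.one_mem).symm

/-- Counting both sides of `S B (u * v) = ⋃_{b ∈ S B u} S b v` forces the families `S b v`,
`b ∈ S B u`, to be disjoint; hence the same holds over any subfamily `s`. -/
theorem card_biUnion_S_of_subset {B : SSBall X} {u v : ℕ} (hu : u ∈ σ.U) (hv : v ∈ σ.U)
    {s : Finset (SSBall X)} (hs : s ⊆ σ.S B u) :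
    #(s.biUnion fun b => σ.S b v) = σ.f v * #s := by
  have hcard : ∀ b, #(σ.S b v) = σ.f v := fun b => σ.S_card b v hv
  have hsplit : σ.S B (u * v) = (s.biUnion fun b => σ.S b v) ∪
      ((σ.S B u \ s).biUnion fun b => σ.S b v) := by
    rw [σ.S_comp B u hu v hv, ← Finset.union_biUnion, Finset.union_sdiff_of_subset hs]
  have htotal : σ.f u * σ.f v ≤ #(s.biUnion fun b => σ.S b v) + σ.f v * #(σ.S B u \ s) := by
    rw [← σ.f_mul u hu v hv, ← σ.S_card B _ (σ.mul_mem u hu v hv), hsplit]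
    refine (Finset.card_union_le _ _).trans (Nat.add_le_add_left ?_ _)
    simpa [hcard, mul_comm] using
      Finset.card_biUnion_le_card_mul (σ.S B u \ s) (σ.S · v) (σ.f v) fun b _ => (hcard b).le
  have hle : #(s.biUnion fun b => σ.S b v) ≤ σ.f v * #s := by
    simpa [hcard, mul_comm] using Finset.card_biUnion_le_card_mul s (σ.S · v) (σ.f v)
      fun b _ => (hcard b).le
  have hu_card : #(σ.S B u \ s) + #s = σ.f u := by
    rw [Finset.card_sdiff_add_card_eq_card hs, σ.S_card B u hu]
  rw [← hu_card] at htotal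
  nlinarith

section Levels

variable {σ} {B : SSBall X} {R : ℕ → ℕ} {𝓑 : ℕ → Finset (SSBall X)}

theorem levels_succ_subset_S (hR : ∀ n, R n ∈ σ.U) (h0 : 𝓑 0 = {B})
    (hchild : ∀ n, 𝓑 (n + 1) ⊆ (𝓑 n).biUnion fun b => σ.S b (R n)) (n : ℕ) :
    𝓑 (n + 1) ⊆ σ.S B (∏ i ∈ Finset.range (n + 1), R i) := by
  induction n with
  | zero => simpa [h0] using hchild 0
  | succ n ih =>
    rw [Finset.prod_range_succ, σ.S_comp B _ (σ.prod_range_mem hR _) _ (hR _)]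
    exact (hchild (n + 1)).trans (Finset.biUnion_subset_biUnion_of_subset_left _ ih)

theorem card_biUnion_levels (hR : ∀ n, R n ∈ σ.U) (h0 : 𝓑 0 = {B})
    (hchild : ∀ n, 𝓑 (n + 1) ⊆ (𝓑 n).biUnion fun b => σ.S b (R n)) (n : ℕ) :
    #((𝓑 n).biUnion fun b => σ.S b (R n)) = σ.f (R n) * #(𝓑 n) := by
  cases n with
  | zero => simp [h0, σ.S_card B _ (hR 0)]
  | succ n =>
    exact σ.card_biUnion_S_of_subset (σ.prod_range_mem hR _) (hR _)
      (levels_succ_subset_S hR h0 hchild n)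

theorem le_card_levels_succ (hR : ∀ n, R n ∈ σ.U) {r : ℕ → ℕ → ℝ} (h0 : 𝓑 0 = {B})
    (hchild : ∀ n, 𝓑 (n + 1) ⊆ (𝓑 n).biUnion fun b => σ.S b (R n)) {n : ℕ}
    {E : ℕ → Finset (SSBall X)}
    (hEsub : ∀ k ≤ n, E k ⊆ (𝓑 (n - k)).biUnion fun B'' =>
      σ.S B'' (∏ i ∈ Finset.range (k + 1), R (n - i)))
    (hEcard : ∀ k ≤ n, ∀ B'' ∈ 𝓑 (n - k),
      (#(E k ∩ σ.S B'' (∏ i ∈ Finset.range (k + 1), R (n - i))) : ℝ) ≤ r (n - k) n)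
    (hnext : 𝓑 (n + 1) =
      ((𝓑 n).biUnion fun b => σ.S b (R n)) \ (Finset.range (n + 1)).biUnion E) :
    (σ.f (R n) : ℝ) * #(𝓑 n) - ∑ k ∈ Finset.range (n + 1), r (n - k) n * #(𝓑 (n - k))
      ≤ #(𝓑 (n + 1)) := by
  have hremoved : (#((Finset.range (n + 1)).biUnion E) : ℝ)
      ≤ ∑ k ∈ Finset.range (n + 1), r (n - k) n * #(𝓑 (n - k)) :=
    calc (#((Finset.range (n + 1)).biUnion E) : ℝ)
        ≤ ∑ k ∈ Finset.range (n + 1), (#(E k) : ℝ) := by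
          exact_mod_cast Finset.card_biUnion_le
      _ ≤ _ := Finset.sum_le_sum fun k hk => card_le_mul_card_of_subset_biUnion
          (hEsub k (Nat.lt_succ_iff.1 (Finset.mem_range.1 hk)))
          (hEcard k (Nat.lt_succ_iff.1 (Finset.mem_range.1 hk)))
  have hcand : (#((𝓑 n).biUnion fun b => σ.S b (R n)) : ℝ)
      ≤ #(𝓑 (n + 1)) + #((Finset.range (n + 1)).biUnion E) := by
    rw [hnext]
    exact_mod_cast Finset.card_le_card_sdiff_add_card
  rw [card_biUnion_levels hR h0 hchild n, Nat.cast_mul] at hcand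
  linarith

end Levels

section Chains

variable {σ} {R : ℕ → ℕ} {b : ℕ → SSBall X}

theorem antitone_toSet_of_chain (hR : ∀ n, R n ∈ σ.U)
    (hb : ∀ n, b (n + 1) ∈ σ.S (b n) (R n)) :
    Antitone fun n => (b n).toSet :=
  antitone_nat_of_succ_le fun n => σ.S_subset _ _ (hR n) _ (hb n)

theorem radius_of_chain (hR : ∀ n, R n ∈ σ.U) (hb : ∀ n, b (n + 1) ∈ σ.S (b n) (R n))
    (n : ℕ) :
    (b n).radius = (b 0).radius / ∏ i ∈ Finset.range n, R i := by
  induction n with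
  | zero => simp
  | succ n ih =>
    rw [σ.S_radius _ _ (hR n) _ (hb n), ih, Finset.prod_range_succ, Nat.cast_mul, div_div]

theorem eventually_const_of_chain (hb : ∀ n, b (n + 1) ∈ σ.S (b n) (R n))
    {M : ℕ} (hM : ∀ n ≥ M, R n = 1) : ∀ n ≥ M + 1, b n = b (M + 1) := by
  have hfix : σ.S (b (M + 1)) 1 = {b (M + 1)} :=
    σ.S_one_eq_singleton (hM M le_rfl ▸ hb M)
  intro n hn
  induction n, hn using Nat.le_induction with
  | base => rfl
  | succ n hn ih =>
    have hnext := hb n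
    rwa [hM n (by omega), ih, hfix, Finset.mem_singleton] at hnext

theorem cauchySeq_center_of_chain (hR : ∀ n, R n ∈ σ.U)
    (hb : ∀ n, b (n + 1) ∈ σ.S (b n) (R n)) : CauchySeq fun n => (b n).center := by
  by_cases hfreq : ∃ᶠ n in atTop, R n ≠ 1
  · have hQ := tendsto_prod_range_atTop_of_frequently_ne_one (fun n => σ.U_pos _ (hR n)) hfreq
    refine cauchySeq_of_le_tendsto_0' (fun n => (b n).radius) (fun n m hnm => ?_) ?_
    · rw [dist_comm]
      exact Metric.mem_closedBall.1 (antitone_toSet_of_chain hR hb hnm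
        (Metric.mem_closedBall_self (b m).radius_pos.le))
    · rw [funext (radius_of_chain hR hb)]
      exact tendsto_const_nhds.div_atTop (tendsto_natCast_atTop_atTop.comp hQ)
  · obtain ⟨M, hM⟩ := eventually_atTop.1 (not_frequently.1 hfreq)
    have hconst := eventually_const_of_chain hb fun n hn => not_not.1 (hM n hn)
    exact (tendsto_atTop_of_eventually_const (i₀ := M + 1) (x := (b (M + 1)).center)
      fun n hn => by rw [hconst n hn]).cauchySeq

theorem exists_forall_mem_of_chain [CompleteSpace X] (hR : ∀ n, R n ∈ σ.U)
    (hb : ∀ n, b (n + 1) ∈ σ.S (b n) (R n)) : ∃ x, ∀ n, x ∈ (b n).toSet := by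
  obtain ⟨x, hx⟩ := cauchySeq_tendsto_of_complete (cauchySeq_center_of_chain hR hb)
  refine ⟨x, fun n => Metric.isClosed_closedBall.mem_of_tendsto hx ?_⟩
  filter_upwards [eventually_ge_atTop n] with m hm
  exact antitone_toSet_of_chain hR hb hm (Metric.mem_closedBall_self (b m).radius_pos.le)

end Chains

end SplittingStructure

/-- (Nonemptiness of generalised Cantor sets.)  Let `K` be a
generalised `(B, ℛ, r)`-Cantor set and define `t 0 = f R₀ - r 0 0` and, for `n ≥ 1`,
`t n = f (R n) - r n n - ∑_{k=1}^{n} r (n-k) n / ∏_{i=1}^{k} t (n-i)`.  If `t n > 0` for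
all `n`, then `K` is nonempty. -/
theorem genCantor_nonempty {X : Type*} [MetricSpace X] [CompleteSpace X]
    (σ : SplittingStructure X) (B : SSBall X)
    (R : ℕ → ℕ) (hR : ∀ n, R n ∈ σ.U)
    (r : ℕ → ℕ → ℝ) (hr : ∀ m n, m ≤ n → 0 ≤ r m n)
    (K : Set X) (hK : σ.IsGenCantor B R r K)
    (t : ℕ → ℝ)
    (ht0 : t 0 = (σ.f (R 0) : ℝ) - r 0 0)
    (htn : ∀ n : ℕ, 1 ≤ n → t n = (σ.f (R n) : ℝ) - r n n -
      ∑ k ∈ Finset.Icc 1 n, r (n - k) n / ∏ i ∈ Finset.Icc 1 k, t (n - i))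
    (hpos : ∀ n, 0 < t n) :
    K.Nonempty := by
  obtain ⟨𝓑, h0, hstep, rfl⟩ := hK
  choose E hEsub hEcard hnext using hstep
  have hchild : ∀ n, 𝓑 (n + 1) ⊆ (𝓑 n).biUnion fun b => σ.S b (R n) :=
    fun n => hnext n ▸ Finset.sdiff_subset
  have ht : ∀ n, t n = (σ.f (R n) : ℝ) - r n n -
      ∑ k ∈ Finset.Icc 1 n, r (n - k) n / ∏ i ∈ Finset.Icc 1 k, t (n - i)
    | 0 => by simpa using ht0
    | n + 1 => htn (n + 1) le_add_self
  have hgrowth := mul_le_succ_of_le_sub_sum (N := fun n => (#(𝓑 n) : ℝ)) hr ht hpos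
    fun n => σ.le_card_levels_succ hR h0 hchild (hEsub n) (hEcard n) (hnext n)
  have hcard : ∀ n, 0 < (#(𝓑 n) : ℝ) := by
    intro n
    induction n with
    | zero => simp [h0]
    | succ n ih => exact (mul_pos (hpos n) ih).trans_le (hgrowth n)
  obtain ⟨b, hbmem, hbchild⟩ := exists_seq_mem_rel_of_forall_exists_parent
    (fun n => Finset.card_pos.1 (by exact_mod_cast hcard n))
    fun n x hx => Finset.mem_biUnion.1 (hchild n hx)
  obtain ⟨x, hx⟩ := σ.exists_forall_mem_of_chain hR hbchild
  exact ⟨x, mem_iInter.2 fun n => mem_iUnion₂.2 ⟨b n, hbmem n, hx n⟩⟩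
end

section
/- Let (X,S,U,f) be a splitting structure on a complete metric space X satisfying condition (S5), and assume A_∞(B) = B for every closed ball B of X. Let φ : X → X be a bi-Lipschitz homeomorphism with constant K > 0, i.e. K⁻¹·d(x₁,x₂) ≤ d(φ(x₁),φ(x₂)) ≤ K·d(x₁,x₂) for all x₁,x₂ ∈ X. Then there exists a constant C > 0 such that for every generalised Cantor set K(B,ℛ,r), the image φ(K(B,ℛ,r)) contains some generalised (Iφ(B), ℛ, C·r)-Cantor set, where C·r := (C·r_{m,n})_{0≤m≤n} and, for B = B(x,ρ), Iφ(B) denotes the inscribed ball B(φ(x), ρ/K). -/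
open scoped Classical
open Filter Set

/-!
Run the splitting construction inside the inscribed ball `Iφ(B)`, discarding at stage `k` of
level `n + 1` exactly the children that meet the `φ`-image of a ball discarded at stage `k` of
level `n + 1` of the original construction. Since `A_∞(B) = B`, every point of a ball lies in one
of its children, so a point whose image survives every level of the new construction has a
preimage surviving every level of the old one.

For the counting, the balls discarded below a new ball `B₀` of level `m` come from removed balls
lying in original level-`m` balls within `4ρ` of `φ⁻¹(cent B₀)`, where `ρ` is the level-`m`
radius; these are `2ρ`-separated, so (S5) with factor `4` bounds their number. Each removed
ball `e` meets the `φ`-images of boundedly many children of `B₀`: the preimages of their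
centres are `2 rad e / K²`-separated and within `2 rad e` of `cent e`, so (S5) with factor
`2K² + 1` applies.
-/

def SeparatedBound (X : Type*) [MetricSpace X] (L : ℝ) (C : ℕ) : Prop :=
  ∀ (z : X) (ρ : ℝ), 0 < ρ → ∀ T : Finset X,
    (T : Set X).Pairwise (fun y y' => 2 * ρ ≤ dist y y') →
    (∀ y ∈ T, dist y z ≤ L * ρ) → T.card ≤ C

theorem CondS5.exists_separatedBound {X : Type*} [MetricSpace X] (h : CondS5 X) {L : ℝ}
    (hL : 1 < L) : ∃ C, SeparatedBound X L C := by
  obtain ⟨C, hC⟩ := h L hL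
  refine ⟨C, fun z ρ hρ T hsep hnear => hC z ρ hρ T
    (fun y hy => ⟨y, Metric.mem_ball_self hρ, Metric.mem_closedBall.2 (hnear y hy)⟩) ?_⟩
  exact fun y hy y' hy' hne => Metric.ball_disjoint_ball (by linarith [hsep hy hy' hne])

theorem SeparatedBound.card_le {X : Type*} [MetricSpace X] {L : ℝ} {C : ℕ}
    (h : SeparatedBound X L C) {α : Type*} (F : Finset α) (p : α → X) (z : X) {ρ : ℝ}
    (hρ : 0 < ρ) (hsep : ∀ a ∈ F, ∀ b ∈ F, a ≠ b → 2 * ρ ≤ dist (p a) (p b))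
    (hnear : ∀ a ∈ F, dist (p a) z ≤ L * ρ) : F.card ≤ C := by
  have hinj : Set.InjOn p F := fun a ha b hb hab => by
    by_contra hne
    have := hsep a ha b hb hne
    rw [hab, dist_self] at this
    linarith
  rw [← Finset.card_image_of_injOn hinj]
  refine h z ρ hρ _ ?_ (Finset.forall_mem_image.2 hnear)
  rw [Finset.coe_image, hinj.pairwise_image]
  exact fun a ha b hb hne => hsep a ha b hb hne

theorem Finset.prod_range_succ_sub_eq_prod_Ico {M : Type*} [CommMonoid M] (f : ℕ → M)
    {k n : ℕ} (hk : k ≤ n) :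
    ∏ i ∈ Finset.range (k + 1), f (n - i) = ∏ i ∈ Finset.Ico (n - k) (n + 1), f i := by
  rw [Finset.range_eq_Ico, Finset.prod_Ico_reflect f 0 (by omega : k + 1 ≤ n + 1)]
  congr 2; omega

theorem Finset.card_biUnion_biUnion_le {α β γ : Type*} [DecidableEq β] [DecidableEq γ]
    (s : Finset α) (t : α → Finset β) (u : β → Finset γ) {a : ℝ} {b : ℕ}
    (ht : ∀ x ∈ s, ((t x).card : ℝ) ≤ a) (hu : ∀ y ∈ s.biUnion t, (u y).card ≤ b) :
    (((s.biUnion t).biUnion u).card : ℝ) ≤ s.card * a * b := by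
  have hst : ((s.biUnion t).card : ℝ) ≤ s.card * a :=
    calc _ ≤ ∑ x ∈ s, ((t x).card : ℝ) := by exact_mod_cast Finset.card_biUnion_le
      _ ≤ ∑ _x ∈ s, a := Finset.sum_le_sum ht
      _ = s.card * a := by rw [Finset.sum_const, nsmul_eq_mul]
  calc _ ≤ (((s.biUnion t).card * b : ℕ) : ℝ) := by
        exact_mod_cast Finset.card_biUnion_le_card_mul _ _ _ hu
    _ ≤ s.card * a * b := by push_cast; gcongr

namespace SplittingStructure

variable {X : Type*} [MetricSpace X] (σ : SplittingStructure X)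

theorem prod_mem_U {ι : Type*} {s : Finset ι} {F : ι → ℕ} (hs : s.Nonempty)
    (hF : ∀ i ∈ s, F i ∈ σ.U) : ∏ i ∈ s, F i ∈ σ.U :=
  Finset.prod_induction_nonempty F (· ∈ σ.U) (fun a b ha hb => σ.mul_mem a ha b hb) hs hF

theorem one_le_of_mem_U {u : ℕ} (hu : u ∈ σ.U) : (1 : ℝ) ≤ u :=
  Nat.one_le_cast.2 (σ.U_pos u hu)

theorem dist_center_le_of_mem_S {B b : SSBall X} {u : ℕ} (hu : u ∈ σ.U) (hb : b ∈ σ.S B u) :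
    dist b.center B.center ≤ B.radius :=
  σ.S_subset B u hu b hb (Metric.mem_closedBall_self b.radius_pos.le)

theorem exists_mem_S_of_mem (hA : ∀ B : SSBall X, σ.Ainfty B = B.toSet) {B : SSBall X}
    {u : ℕ} (hu : u ∈ σ.U) {x : X} (hx : x ∈ B.toSet) : ∃ b ∈ σ.S B u, x ∈ b.toSet := by
  rw [← hA B] at hx
  simpa [Au] using Set.mem_iInter₂.1 hx u hu

noncomputable def children (F : Finset (SSBall X)) (u : ℕ) : Finset (SSBall X) :=
  F.biUnion fun b => σ.S b u

section Chain

variable {σ} {R : ℕ → ℕ} {𝓑 : ℕ → Finset (SSBall X)}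

theorem radius_eq_of_mem_chain (hR : ∀ n, R n ∈ σ.U)
    (hsub : ∀ n, 𝓑 (n + 1) ⊆ σ.children (𝓑 n) (R n)) {B : SSBall X} (h0 : 𝓑 0 = {B}) :
    ∀ n, ∀ b ∈ 𝓑 n, b.radius = B.radius / ∏ i ∈ Finset.range n, R i := by
  intro n
  induction n with
  | zero => simp [h0]
  | succ n ih =>
    intro b hb
    obtain ⟨b', hb', hbS⟩ := Finset.mem_biUnion.1 (hsub n hb)
    rw [σ.S_radius b' _ (hR n) b hbS, ih b' hb', Finset.prod_range_succ, Nat.cast_mul, div_div]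

theorem exists_mem_S_prod_of_mem_children (hR : ∀ n, R n ∈ σ.U)
    (hsub : ∀ n, 𝓑 (n + 1) ⊆ σ.children (𝓑 n) (R n)) {m n : ℕ} (hmn : m ≤ n) {b : SSBall X}
    (hb : b ∈ σ.children (𝓑 n) (R n)) :
    ∃ c ∈ 𝓑 m, b ∈ σ.S c (∏ i ∈ Finset.Ico m (n + 1), R i) := by
  induction n, hmn using Nat.le_induction generalizing b with
  | base => simpa using Finset.mem_biUnion.1 hb
  | succ n hmn ih =>
    obtain ⟨b', hb', hbS⟩ := Finset.mem_biUnion.1 hb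
    obtain ⟨c, hc, hb'S⟩ := ih (hsub n hb')
    refine ⟨c, hc, ?_⟩
    rw [Finset.prod_Ico_succ_top (by omega), σ.S_comp c _
      (σ.prod_mem_U (Finset.nonempty_Ico.2 (by omega)) fun i _ => hR i) _ (hR _)]
    exact Finset.mem_biUnion.2 ⟨b', hb'S, hbS⟩

theorem two_mul_radius_le_dist_center_of_mem_chain (hR : ∀ n, R n ∈ σ.U)
    (hsub : ∀ n, 𝓑 (n + 1) ⊆ σ.children (𝓑 n) (R n)) {B : SSBall X} (h0 : 𝓑 0 = {B})
    {n : ℕ} {c c' : SSBall X} (hc : c ∈ 𝓑 n) (hc' : c' ∈ 𝓑 n) (hne : c ≠ c') :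
    2 * (B.radius / ∏ i ∈ Finset.range n, R i) ≤ dist c.center c'.center := by
  cases n with
  | zero => simp_all
  | succ n =>
    have hroot : ∀ d ∈ 𝓑 (n + 1), d ∈ σ.S B (∏ i ∈ Finset.Ico 0 (n + 1), R i) := by
      intro d hd
      obtain ⟨d₀, hd₀, hdS⟩ := exists_mem_S_prod_of_mem_children hR hsub n.zero_le (hsub n hd)
      rw [h0, Finset.mem_singleton] at hd₀
      rwa [hd₀] at hdS
    have := σ.S_sep B _ (σ.prod_mem_U (by simp) fun i _ => hR i) c (hroot c hc) c'
      (hroot c' hc') hne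
    rwa [← Finset.range_eq_Ico, mul_div_assoc] at this

end Chain

section BiLipschitz

variable {K : ℝ} {φ g : X → X}

theorem card_filter_meets_preimage_le (hK : 0 < K) (hg : Function.RightInverse g φ)
    (hlo : ∀ x y, dist x y ≤ K * dist (φ x) (φ y))
    (hup : ∀ x y, dist (φ x) (φ y) ≤ K * dist x y) {C : ℕ}
    (hC : SeparatedBound X (2 * K ^ 2 + 1) C) {B₀ e : SSBall X} {u : ℕ} (hu : u ∈ σ.U)
    (hrad : B₀.radius / u = e.radius / K) :
    ((σ.S B₀ u).filter fun b => ∃ x ∈ e.toSet, φ x ∈ b.toSet).card ≤ C := by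
  have hρ : 0 < e.radius / K ^ 2 := div_pos e.radius_pos (by positivity)
  refine hC.card_le _ (fun b => g b.center) e.center hρ ?_ ?_
  · intro a ha b hb hab
    have hsep := σ.S_sep B₀ u hu a (Finset.mem_filter.1 ha).1 b (Finset.mem_filter.1 hb).1 hab
    have hgab := hup (g a.center) (g b.center)
    rw [hg, hg] at hgab
    rw [mul_div_assoc, hrad] at hsep
    calc 2 * (e.radius / K ^ 2) = 2 * (e.radius / K) / K := by field_simp
      _ ≤ dist (g a.center) (g b.center) := by rw [div_le_iff₀ hK]; linarith
  · intro b hb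
    obtain ⟨hbS, x, hxe, hxb⟩ := Finset.mem_filter.1 hb
    have hbx : dist (g b.center) x ≤ e.radius :=
      calc dist (g b.center) x ≤ K * dist b.center (φ x) := by
            simpa [hg b.center] using hlo (g b.center) x
        _ ≤ K * b.radius := by gcongr; rw [dist_comm]; exact hxb
        _ = e.radius := by rw [σ.S_radius B₀ u hu b hbS, hrad]; field_simp
    have hxe' : dist x e.center ≤ e.radius := hxe
    have hL : (2 * K ^ 2 + 1) * (e.radius / K ^ 2) = 2 * e.radius + e.radius / K ^ 2 := by
      field_simp
    linarith [dist_triangle (g b.center) x e.center]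

theorem dist_center_le_of_map_meets (hK : 0 < K) (hg : Function.RightInverse g φ)
    (hlo : ∀ x y, dist x y ≤ K * dist (φ x) (φ y)) {B₀ c b e : SSBall X} {u : ℕ}
    (hu : u ∈ σ.U) (hB₀ : B₀.radius = c.radius / K) (hb : b ∈ σ.S B₀ u) (he : e ∈ σ.S c u)
    {x : X} (hxe : x ∈ e.toSet) (hxb : φ x ∈ b.toSet) :
    dist c.center (g B₀.center) ≤ 4 * c.radius := by
  have hu1 := σ.one_le_of_mem_U hu
  have hlo' : ∀ y x, dist (g y) x ≤ K * dist y (φ x) := fun y x => by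
    simpa [hg y] using hlo (g y) x
  have hce : dist c.center e.center ≤ c.radius := by
    rw [dist_comm]; exact σ.dist_center_le_of_mem_S hu he
  have hex : dist e.center x ≤ c.radius :=
    calc dist e.center x ≤ e.radius := by rw [dist_comm]; exact hxe
      _ ≤ c.radius := by
        rw [σ.S_radius c u hu e he]; exact div_le_self c.radius_pos.le hu1
  have hxb' : dist x (g b.center) ≤ c.radius :=
    calc dist x (g b.center) ≤ K * dist b.center (φ x) := by rw [dist_comm]; exact hlo' _ _
      _ ≤ K * b.radius := by gcongr; rw [dist_comm]; exact hxb
      _ = c.radius / u := by rw [σ.S_radius B₀ u hu b hb, hB₀]; field_simp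
      _ ≤ c.radius := div_le_self c.radius_pos.le hu1
  have hbB₀ : dist (g b.center) (g B₀.center) ≤ c.radius :=
    calc dist (g b.center) (g B₀.center) ≤ K * dist b.center B₀.center := by
          simpa [hg B₀.center] using hlo' b.center (g B₀.center)
      _ ≤ K * B₀.radius := by gcongr; exact σ.dist_center_le_of_mem_S hu hb
      _ = c.radius := by rw [hB₀]; field_simp
  linarith [dist_triangle4 c.center e.center x (g b.center),
    dist_triangle c.center (g b.center) (g B₀.center)]

end BiLipschitz

structure CantorScheme (B : SSBall X) (R : ℕ → ℕ) (r : ℕ → ℕ → ℝ) where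
  level : ℕ → Finset (SSBall X)
  removed : ℕ → ℕ → Finset (SSBall X)
  level_zero : level 0 = {B}
  removed_subset : ∀ n, ∀ k ≤ n,
    removed n k ⊆ σ.children (level (n - k)) (∏ i ∈ Finset.range (k + 1), R (n - i))
  card_removed_le : ∀ n, ∀ k ≤ n, ∀ c ∈ level (n - k),
    ((removed n k ∩ σ.S c (∏ i ∈ Finset.range (k + 1), R (n - i))).card : ℝ) ≤ r (n - k) n
  level_succ : ∀ n,
    level (n + 1) = σ.children (level n) (R n) \ (Finset.range (n + 1)).biUnion (removed n)

variable {σ} {B : SSBall X} {R : ℕ → ℕ} {r : ℕ → ℕ → ℝ}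

def CantorScheme.limit (D : σ.CantorScheme B R r) : Set X :=
  ⋂ n, ⋃ b ∈ D.level n, b.toSet

theorem isGenCantor_iff {Kset : Set X} :
    σ.IsGenCantor B R r Kset ↔ ∃ D : σ.CantorScheme B R r, Kset = D.limit := by
  constructor
  · rintro ⟨𝓑, h0, hstep, rfl⟩
    choose E hE₁ hE₂ hE₃ using hstep
    exact ⟨⟨𝓑, E, h0, hE₁, hE₂, hE₃⟩, rfl⟩
  · rintro ⟨D, rfl⟩
    exact ⟨D.level, D.level_zero,
      fun n => ⟨D.removed n, D.removed_subset n, D.card_removed_le n, D.level_succ n⟩, rfl⟩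

namespace CantorScheme

variable (D : σ.CantorScheme B R r) (φ : X → X)

theorem level_succ_subset (n : ℕ) : D.level (n + 1) ⊆ σ.children (D.level n) (R n) := by
  rw [D.level_succ]; exact Finset.sdiff_subset

noncomputable def imageRemoved (n : ℕ) (F : Finset (SSBall X)) (k : ℕ) : Finset (SSBall X) :=
  (σ.children F (R n)).filter fun b => ∃ e ∈ D.removed n k, ∃ x ∈ e.toSet, φ x ∈ b.toSet

noncomputable def imageLevel (B' : SSBall X) : ℕ → Finset (SSBall X)
  | 0 => {B'}
  | n + 1 => σ.children (imageLevel B' n) (R n) \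
      (Finset.range (n + 1)).biUnion (D.imageRemoved φ n (imageLevel B' n))

theorem imageLevel_succ_subset (B' : SSBall X) (n : ℕ) :
    D.imageLevel φ B' (n + 1) ⊆ σ.children (D.imageLevel φ B' n) (R n) :=
  Finset.sdiff_subset

variable {φ}

theorem exists_mem_level_of_map_mem_imageLevel (hR : ∀ n, R n ∈ σ.U)
    (hA : ∀ B : SSBall X, σ.Ainfty B = B.toSet) {B' : SSBall X}
    (hB' : ∀ x, φ x ∈ B'.toSet → x ∈ B.toSet) :
    ∀ n, ∀ b ∈ D.imageLevel φ B' n, ∀ x, φ x ∈ b.toSet → ∃ c ∈ D.level n, x ∈ c.toSet := by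
  intro n
  induction n with
  | zero =>
    intro b hb x hx
    rw [imageLevel, Finset.mem_singleton] at hb
    subst hb
    exact ⟨B, by simp [D.level_zero], hB' x hx⟩
  | succ n ih =>
    intro b hb x hx
    obtain ⟨hb, hkept⟩ := Finset.mem_sdiff.1 hb
    obtain ⟨b', hb', hbS⟩ := Finset.mem_biUnion.1 hb
    obtain ⟨c, hc, hxc⟩ := ih b' hb' x (σ.S_subset b' _ (hR n) b hbS hx)
    obtain ⟨d, hdS, hxd⟩ := σ.exists_mem_S_of_mem hA (hR n) hxc
    refine ⟨d, ?_, hxd⟩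
    rw [D.level_succ, Finset.mem_sdiff]
    refine ⟨Finset.mem_biUnion.2 ⟨c, hc, hdS⟩, fun hd => hkept ?_⟩
    obtain ⟨k, hk, hdk⟩ := Finset.mem_biUnion.1 hd
    exact Finset.mem_biUnion.2 ⟨k, hk, Finset.mem_filter.2 ⟨hb, d, hdk, x, hxd, hx⟩⟩

theorem iInter_imageLevel_subset_image_limit (hφ : Function.Surjective φ)
    (hR : ∀ n, R n ∈ σ.U) (hA : ∀ B : SSBall X, σ.Ainfty B = B.toSet) {B' : SSBall X}
    (hB' : ∀ x, φ x ∈ B'.toSet → x ∈ B.toSet) :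
    ⋂ n, ⋃ b ∈ D.imageLevel φ B' n, b.toSet ⊆ φ '' D.limit := by
  intro y hy
  obtain ⟨x, rfl⟩ := hφ y
  refine ⟨x, Set.mem_iInter.2 fun n => ?_, rfl⟩
  obtain ⟨b, hb, hxb⟩ := Set.mem_iUnion₂.1 (Set.mem_iInter.1 hy n)
  obtain ⟨c, hc, hxc⟩ := D.exists_mem_level_of_map_mem_imageLevel hR hA hB' n b hb x hxb
  exact Set.mem_iUnion₂.2 ⟨c, hc, hxc⟩

theorem imageRemoved_subset (hR : ∀ n, R n ∈ σ.U) (B' : SSBall X) {n k : ℕ} (hk : k ≤ n) :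
    D.imageRemoved φ n (D.imageLevel φ B' n) k ⊆
      σ.children (D.imageLevel φ B' (n - k)) (∏ i ∈ Finset.range (k + 1), R (n - i)) := by
  intro b hb
  obtain ⟨c, hc, hbc⟩ := exists_mem_S_prod_of_mem_children hR (D.imageLevel_succ_subset φ B')
    (Nat.sub_le n k) (Finset.mem_filter.1 hb).1
  rw [Finset.prod_range_succ_sub_eq_prod_Ico R hk]
  exact Finset.mem_biUnion.2 ⟨c, hc, hbc⟩

theorem radius_eq_div_of_mem_imageLevel (hR : ∀ n, R n ∈ σ.U) {K : ℝ} {B' : SSBall X}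
    (hB' : B'.radius = B.radius / K) {m : ℕ} {B₀ c : SSBall X}
    (hB₀ : B₀ ∈ D.imageLevel φ B' m) (hc : c ∈ D.level m) : B₀.radius = c.radius / K := by
  rw [radius_eq_of_mem_chain hR (D.imageLevel_succ_subset φ B') rfl _ _ hB₀, hB',
    radius_eq_of_mem_chain hR D.level_succ_subset D.level_zero _ _ hc, div_right_comm]

theorem card_imageRemoved_inter_le (hr : ∀ m n, m ≤ n → 0 ≤ r m n) (hR : ∀ n, R n ∈ σ.U)
    {K : ℝ} (hK : 0 < K) {g : X → X} (hg : Function.RightInverse g φ)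
    (hlo : ∀ x y, dist x y ≤ K * dist (φ x) (φ y))
    (hup : ∀ x y, dist (φ x) (φ y) ≤ K * dist x y) {C₄ C₅ : ℕ} (hC₄ : SeparatedBound X 4 C₄)
    (hC₅ : SeparatedBound X (2 * K ^ 2 + 1) C₅) {B' : SSBall X} (hB' : B'.radius = B.radius / K)
    {n k : ℕ} (hk : k ≤ n) {B₀ : SSBall X} (hB₀ : B₀ ∈ D.imageLevel φ B' (n - k)) :
    ((D.imageRemoved φ n (D.imageLevel φ B' n) k ∩
        σ.S B₀ (∏ i ∈ Finset.range (k + 1), R (n - i))).card : ℝ) ≤ C₄ * C₅ * r (n - k) n := by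
  set Q := ∏ i ∈ Finset.range (k + 1), R (n - i)
  have hQ : Q ∈ σ.U := σ.prod_mem_U (by simp) fun i _ => hR _
  set ρ := B.radius / ∏ i ∈ Finset.range (n - k), R i
  have hρ : 0 < ρ := div_pos B.radius_pos
    (Nat.cast_pos.2 (Finset.prod_pos fun i _ => σ.U_pos _ (hR i)))
  have hradc : ∀ c ∈ D.level (n - k), c.radius = ρ :=
    radius_eq_of_mem_chain hR D.level_succ_subset D.level_zero _
  set near := (D.level (n - k)).filter fun c => dist c.center (g B₀.center) ≤ 4 * ρ
  have hnear : near.card ≤ C₄ :=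
    hC₄.card_le near (·.center) (g B₀.center) hρ
      (fun a ha b hb hab => two_mul_radius_le_dist_center_of_mem_chain hR D.level_succ_subset
        D.level_zero (Finset.mem_filter.1 ha).1 (Finset.mem_filter.1 hb).1 hab)
      (fun a ha => (Finset.mem_filter.1 ha).2)
  set meets := fun e : SSBall X => (σ.S B₀ Q).filter fun b => ∃ x ∈ e.toSet, φ x ∈ b.toSet
  have hcover : D.imageRemoved φ n (D.imageLevel φ B' n) k ∩ σ.S B₀ Q ⊆
      (near.biUnion fun c => D.removed n k ∩ σ.S c Q).biUnion meets := by
    intro b hb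
    obtain ⟨hbr, hbS⟩ := Finset.mem_inter.1 hb
    obtain ⟨-, e, he, x, hxe, hxb⟩ := Finset.mem_filter.1 hbr
    obtain ⟨c, hc, heS⟩ := Finset.mem_biUnion.1 (D.removed_subset n k hk he)
    have hcnear : c ∈ near := Finset.mem_filter.2 ⟨hc, hradc c hc ▸
      σ.dist_center_le_of_map_meets hK hg hlo hQ
        (D.radius_eq_div_of_mem_imageLevel hR hB' hB₀ hc) hbS heS hxe hxb⟩
    exact Finset.mem_biUnion.2 ⟨e, Finset.mem_biUnion.2 ⟨c, hcnear, Finset.mem_inter.2 ⟨he, heS⟩⟩,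
      Finset.mem_filter.2 ⟨hbS, x, hxe, hxb⟩⟩
  have hmeets : ∀ e ∈ near.biUnion fun c => D.removed n k ∩ σ.S c Q, (meets e).card ≤ C₅ := by
    intro e he
    obtain ⟨c, hc, he⟩ := Finset.mem_biUnion.1 he
    refine σ.card_filter_meets_preimage_le hK hg hlo hup hC₅ hQ ?_
    rw [σ.S_radius c Q hQ e (Finset.mem_inter.1 he).2,
      D.radius_eq_div_of_mem_imageLevel hR hB' hB₀ (Finset.mem_filter.1 hc).1, div_right_comm]
  calc _ ≤ (((near.biUnion fun c => D.removed n k ∩ σ.S c Q).biUnion meets).card : ℝ) := by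
        exact_mod_cast Finset.card_le_card hcover
    _ ≤ near.card * r (n - k) n * C₅ := Finset.card_biUnion_biUnion_le _ _ _
        (fun c hc => D.card_removed_le n k hk c (Finset.mem_filter.1 hc).1) hmeets
    _ ≤ C₄ * r (n - k) n * C₅ := by
        gcongr
        exact hr _ _ (Nat.sub_le n k)
    _ = C₄ * C₅ * r (n - k) n := by ring

end CantorScheme

end SplittingStructure

theorem genCantor_image_biLipschitz_general {X : Type*} [MetricSpace X]
    (σ : SplittingStructure X) (hS5 : CondS5 X)
    (hA : ∀ B : SSBall X, σ.Ainfty B = B.toSet)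
    (φ : X → X) (hbij : Function.Bijective φ)
    (K : ℝ) (hK : 0 < K)
    (hlip : ∀ x₁ x₂ : X, K⁻¹ * dist x₁ x₂ ≤ dist (φ x₁) (φ x₂) ∧
      dist (φ x₁) (φ x₂) ≤ K * dist x₁ x₂) :
    ∃ C : ℝ, 0 < C ∧
      ∀ (B : SSBall X) (R : ℕ → ℕ), (∀ n, R n ∈ σ.U) →
      ∀ r : ℕ → ℕ → ℝ, (∀ m n, m ≤ n → 0 ≤ r m n) →
      ∀ Kset : Set X, σ.IsGenCantor B R r Kset →
      ∃ K' : Set X, K' ⊆ φ '' Kset ∧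
        σ.IsGenCantor ⟨φ B.center, B.radius / K, div_pos B.radius_pos hK⟩ R
          (fun m n => C * r m n) K' := by
  have hlo : ∀ x y, dist x y ≤ K * dist (φ x) (φ y) := fun x y =>
    (inv_mul_le_iff₀ hK).1 (hlip x y).1
  obtain ⟨g, hg⟩ := hbij.2.hasRightInverse
  obtain ⟨C₄, hC₄⟩ := hS5.exists_separatedBound (by norm_num : (1 : ℝ) < 4)
  obtain ⟨C₅, hC₅⟩ := hS5.exists_separatedBound (L := 2 * K ^ 2 + 1) (by nlinarith)
  refine ⟨C₄ * C₅ + 1, by positivity, fun B R hR r hr Kset hKset => ?_⟩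
  obtain ⟨D, rfl⟩ := σ.isGenCantor_iff.1 hKset
  set B' : SSBall X := ⟨φ B.center, B.radius / K, div_pos B.radius_pos hK⟩
  have hB' : ∀ x, φ x ∈ B'.toSet → x ∈ B.toSet := fun x hx =>
    calc dist x B.center ≤ K * dist (φ x) (φ B.center) := hlo x B.center
      _ ≤ K * (B.radius / K) := by gcongr; exact hx
      _ = B.radius := by field_simp
  let D' : σ.CantorScheme B' R fun m n => (C₄ * C₅ + 1 : ℝ) * r m n :=
    { level := D.imageLevel φ B'
      removed := fun n => D.imageRemoved φ n (D.imageLevel φ B' n)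
      level_zero := rfl
      removed_subset := fun n k hk => D.imageRemoved_subset hR B' hk
      card_removed_le := fun n k hk B₀ hB₀ =>
        (D.card_imageRemoved_inter_le hr hR hK hg hlo (fun x y => (hlip x y).2) hC₄ hC₅ rfl hk
          hB₀).trans (mul_le_mul_of_nonneg_right (by linarith) (hr _ _ (Nat.sub_le n k)))
      level_succ := fun n => rfl }
  exact ⟨D'.limit, D.iInter_imageLevel_subset_image_limit hbij.2 hR hA hB',
    σ.isGenCantor_iff.2 ⟨D', rfl⟩⟩

/-- (Images of generalised Cantor sets under bi-Lipschitz maps.)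
Suppose `X` satisfies condition (S5) and `A_∞(B) = B` for every ball `B`, and let
`φ : X → X` be a bi-Lipschitz homeomorphism with constant `K`.  Then there is a
constant `C > 0` such that the image `φ(K(B,ℛ,r))` of any generalised
`(B, ℛ, r)`-Cantor set contains a generalised `(Iφ(B), ℛ, C·r)`-Cantor set, where
`Iφ(B) = B(φ(cent B), rad B / K)` is the inscribed ball. -/
theorem genCantor_image_biLipschitz {X : Type*} [MetricSpace X] [CompleteSpace X]
    (σ : SplittingStructure X) (hS5 : CondS5 X)
    (hA : ∀ B : SSBall X, σ.Ainfty B = B.toSet)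
    (φ : X → X) (hbij : Function.Bijective φ)
    (K : ℝ) (hK : 0 < K)
    (hlip : ∀ x₁ x₂ : X, K⁻¹ * dist x₁ x₂ ≤ dist (φ x₁) (φ x₂) ∧
      dist (φ x₁) (φ x₂) ≤ K * dist x₁ x₂) :
    ∃ C : ℝ, 0 < C ∧
      ∀ (B : SSBall X) (R : ℕ → ℕ), (∀ n, R n ∈ σ.U) →
      ∀ r : ℕ → ℕ → ℝ, (∀ m n, m ≤ n → 0 ≤ r m n) →
      ∀ Kset : Set X, σ.IsGenCantor B R r Kset →
      ∃ K' : Set X, K' ⊆ φ '' Kset ∧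
        σ.IsGenCantor ⟨φ B.center, B.radius / K, div_pos B.radius_pos hK⟩ R
          (fun m n => C * r m n) K' :=
  genCantor_image_biLipschitz_general σ hS5 hA φ hbij K hK hlip
end
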